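/- Let f and h be problems with f ≰_W h. Then the set { D ⊆ ℕ : f ⊓ χ_D ≤_W h } is countably infinite if dom(h) ≤_M dom(f), and it is empty if dom(h) ≰_M dom(f). -/

import Mathlib

namespace WeihrauchPaper

/-- Baire space ℕ^ℕ. -/
abbrev Baire : Type := ℕ → ℕ

/-- Prepend a natural number to an element of Baire space: `(cons e q) 0 = e`, `(cons e q) (n+1) = q n`. -/
def cons (e : ℕ) (q : Baire) : Baire
  | 0 => e
  | n + 1 => q n

/-- Pairing of two elements of Baire space by interleaving. -/
def pair (p q : Baire) : Baire := fun n => if n % 2 = 0 then p (n / 2) else q (n / 2)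

def left (x : Baire) : Baire := fun n => x (2 * n)
def right (x : Baire) : Baire := fun n => x (2 * n + 1)

/-- The finite initial segment of `p` of length `k`. -/
def pref (p : Baire) (k : ℕ) : List ℕ := List.ofFn fun i : Fin k => p i

/-- Result of running the `e`-th partial computable function on the pair
(code of the length-`k` prefix of `p`, input `n`). -/
def query (e : ℕ) (p : Baire) (k n : ℕ) : Part ℕ :=
  Nat.Partrec.Code.eval (Denumerable.ofNat Nat.Partrec.Code e)
    (Nat.pair (Encodable.encode (pref p k)) n)

/-- `FEval e p q` : the `e`-th partial computable functional on Baire space, applied to `p`,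
is defined and equals `q`.  The value at `n` is obtained from the least prefix length `k`
on which the computation converges, which makes the functional single-valued. -/
def FEval (e : ℕ) (p q : Baire) : Prop :=
  ∀ n, ∃ k, query e p k n = Part.some (q n) ∧ ∀ k' < k, ¬ (query e p k' n).Dom

/-- Turing reducibility on Baire space: `q ≤_T p` iff `q = Φ_e(p)` for some `e`. -/
def TuringLE (q p : Baire) : Prop := ∃ e, FEval e p q

/-- Medvedev reducibility: `A ≤_M B` iff some partial computable functional is defined on all
of `B` and maps `B` into `A`. -/
def MedLE (A B : Set Baire) : Prop := ∃ e, ∀ q ∈ B, ∃ p, FEval e q p ∧ p ∈ A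

def MedEquiv (A B : Set Baire) : Prop := MedLE A B ∧ MedLE B A

def MedLT (A B : Set Baire) : Prop := MedLE A B ∧ ¬ MedLE B A

/-- The meet `P ∧ Q := 0⌢P ∪ 1⌢Q` in the Medvedev degrees. -/
def medMeet (P Q : Set Baire) : Set Baire := (cons 0 '' P) ∪ (cons 1 '' Q)

/-- `Succ p = { e⌢q : Φ_e(q) = p and q ≰_T p }`. -/
def Succ (p : Baire) : Set Baire :=
  {x | ∃ e q, x = cons e q ∧ FEval e q p ∧ ¬ TuringLE q p}

/-- A problem (partial multi-valued function on Baire space), represented as the map sending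
an instance to its (possibly empty) set of solutions. -/
abbrev Problem : Type := Baire → Set Baire

/-- The domain of a problem: the instances having at least one solution. -/
def dom (f : Problem) : Set Baire := {x | (f x).Nonempty}

/-- Weihrauch reducibility `f ≤_W g`. -/
def WLE (f g : Problem) : Prop :=
  ∃ eΦ eΨ, ∀ p ∈ dom f, ∃ p', FEval eΦ p p' ∧ p' ∈ dom g ∧
    ∀ q ∈ g p', ∃ r, FEval eΨ (pair p q) r ∧ r ∈ f p

def WEquiv (f g : Problem) : Prop := WLE f g ∧ WLE g f

def WLT (f g : Problem) : Prop := WLE f g ∧ ¬ WLE g f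

/-- The identity on Baire space, as a problem. -/
def idB : Problem := fun p => {p}

/-- The restriction of the identity to `X ⊆ ℕ^ℕ`, as a problem. -/
def idRestrict (X : Set Baire) : Problem := fun p => {q | p ∈ X ∧ q = p}

/-- The join `f ⊔ g`, with domain `{0}×dom f ∪ {1}×dom g` (coded via `cons`). -/
def join (f g : Problem) : Problem := fun x =>
  if x 0 = 0 then f (fun n => x (n + 1))
  else if x 0 = 1 then g (fun n => x (n + 1))
  else ∅

/-- The meet `f ⊓ g`, with domain `dom f × dom g` (coded via `pair`) and
`(f ⊓ g)(x,z) = {0}×f(x) ∪ {1}×g(z)` (coded via `cons`). -/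
def meet (f g : Problem) : Problem := fun x =>
  {y | left x ∈ dom f ∧ right x ∈ dom g ∧
    ((∃ z ∈ f (left x), y = cons 0 z) ∨ (∃ z ∈ g (right x), y = cons 1 z))}

/-- The constant sequence with value `n`. -/
def const (n : ℕ) : Baire := fun _ => n

/-- The characteristic function of `D ⊆ ℕ` as a problem: defined on the constant sequences,
with `χ_D(n)` the constantly-1 sequence if `n ∈ D` and the constantly-0 sequence otherwise. -/
def chi (D : Set ℕ) : Problem := fun x =>
  {y | ∃ n, x = const n ∧ ((n ∈ D ∧ y = const 1) ∨ (n ∉ D ∧ y = const 0))}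

/-- The set of non-computable elements of Baire space. -/
def NR : Set Baire := {q | ¬ Computable q}

/-- `f` is a minimal cover of `h` in the Weihrauch degrees. -/
def MinimalCover (f h : Problem) : Prop :=
  WLT h f ∧ ¬ ∃ g, WLT h g ∧ WLT g f

/-- `f` is a strong minimal cover of `h` in the Weihrauch degrees. -/
def StrongMinimalCover (f h : Problem) : Prop :=
  WLT h f ∧ ∀ g, WLT g f → WLE g h


section Aux
open Nat.Partrec (Code)
open Nat.Partrec.Code

lemma left_pair (p q : Baire) : left (pair p q) = p := by
  funext n; simp [left, pair, Nat.mul_div_cancel_left, Nat.mul_mod_right]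

lemma right_pair (p q : Baire) : right (pair p q) = q := by
  funext n; simp [right, pair, Nat.mul_add_mod]
  congr 1; omega

lemma pref_length (p : Baire) (k : ℕ) : (pref p k).length = k := by simp [pref]

lemma pref_getD (p : Baire) {k i : ℕ} (h : i < k) : (pref p k).getD i 0 = p i := by
  rw [List.getD_eq_getElem _ _ (by simpa [pref] using h)]
  simp [pref]

lemma FEval_unique {e : ℕ} {p q q' : Baire} (h : FEval e p q) (h' : FEval e p q') : q = q' := by
  funext n
  obtain ⟨k, hk, hmin⟩ := h n
  obtain ⟨k', hk', hmin'⟩ := h' n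
  have hkk : k = k' := by
    by_contra hne
    rcases Nat.lt_or_ge k k' with hlt | hge
    · exact hmin' k hlt (by rw [hk]; trivial)
    · exact hmin k' (lt_of_le_of_ne hge (Ne.symm hne)) (by rw [hk']; trivial)
  subst hkk
  have := hk.symm.trans hk'
  exact Part.some_injective this

end Aux
section Transfer
open Nat.Partrec (Code)
open Nat.Partrec.Code

lemma transfer (e : ℕ) (T : List ℕ → List ℕ) (hT : Primrec T) (v : ℕ → ℕ) (hv : Primrec v)
    (π : Baire → Baire) (u : ℕ → ℕ) (hu : Monotone u) (hsurj : ∀ j, ∃ k, u k = j)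
    (hTpref : ∀ p k, T (pref p k) = pref (π p) (u k)) :
    ∃ e', ∀ p r, FEval e (π p) r → FEval e' p (fun n => r (v n)) := by
  classical
  set t : ℕ → ℕ := fun x =>
    Nat.pair (Encodable.encode (T (Denumerable.ofNat (List ℕ) x.unpair.1))) (v x.unpair.2) with ht_def
  have htc : Computable t := by
    apply Primrec.to_comp
    exact Primrec₂.natPair.comp
      (Primrec.encode.comp (hT.comp ((Primrec.ofNat (List ℕ)).comp
        (Primrec.fst.comp Primrec.unpair))))
      (hv.comp (Primrec.snd.comp Primrec.unpair))
  obtain ⟨ct, hct⟩ := Nat.Partrec.Code.exists_code.1 (Partrec.nat_iff.mp htc)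
  refine ⟨Encodable.encode (Code.comp (Denumerable.ofNat Code e) ct), ?_⟩
  intro p r hr
  have hq : ∀ k n, query (Encodable.encode (Code.comp (Denumerable.ofNat Code e) ct)) p k n
      = query e (π p) (u k) (v n) := by
    intro k n
    have h1 : t (Nat.pair (Encodable.encode (pref p k)) n)
        = Nat.pair (Encodable.encode (pref (π p) (u k))) (v n) := by
      simp [ht_def, Nat.unpair_pair, Denumerable.ofNat_encode, hTpref]
    simp only [query, Denumerable.ofNat_encode, Nat.Partrec.Code.eval, hct]
    simp [h1]
    exact Part.bind_some _ _
  intro n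
  obtain ⟨j, hj, hjmin⟩ := hr (v n)
  have hex := hsurj j
  refine ⟨Nat.find hex, ?_, ?_⟩
  · rw [hq, Nat.find_spec hex]; exact hj
  · intro k' hk' hdom
    rw [hq] at hdom
    have hle : u k' ≤ j := by rw [← Nat.find_spec hex]; exact hu hk'.le
    have hne : u k' ≠ j := fun hkj => Nat.find_min hex hk' hkj
    exact hjmin _ (lt_of_le_of_ne hle hne) hdom

end Transfer
section Transforms
open Nat.Partrec (Code)
open Nat.Partrec.Code

private lemma primrec_map_range {l : List ℕ → ℕ} (hl : Primrec l) {g : List ℕ → ℕ → ℕ}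
    (hg : Primrec₂ g) : Primrec fun L => (List.range (l L)).map (g L) :=
  Primrec.list_map (Primrec.list_range.comp hl) hg

private lemma primrec_getD_comp {g : List ℕ × ℕ → ℕ} (hg : Primrec g) :
    Primrec fun a : List ℕ × ℕ => a.1.getD (g a) 0 :=
  (Primrec.list_getD 0).comp Primrec.fst hg

/-- interleave with constant: `pref p k ↦ pref (pair p (const c)) k` -/
def TA (c : ℕ) (L : List ℕ) : List ℕ :=
  (List.range L.length).map (fun i => if i % 2 = 0 then L.getD (i / 2) 0 else c)

lemma TA_primrec (c : ℕ) : Primrec (TA c) := by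
  apply primrec_map_range Primrec.list_length
  apply Primrec.ite
  · exact PrimrecRel.comp Primrec.eq
      (Primrec₂.comp Primrec.nat_mod Primrec.snd (Primrec.const 2)) (Primrec.const 0)
  · exact primrec_getD_comp (Primrec₂.comp Primrec.nat_div Primrec.snd (Primrec.const 2))
  · exact Primrec.const c

lemma pref_getElem (p : Baire) {k i : ℕ} (h : i < (pref p k).length) : (pref p k)[i] = p i := by
  simp [pref]

lemma TA_pref (c : ℕ) (p : Baire) (k : ℕ) : TA c (pref p k) = pref (pair p (const c)) k := by
  apply List.ext_getElem
  · simp [TA, pref_length, pref]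
  · intro i h1 h2
    have hik : i < k := by simpa [TA, pref_length] using h1
    simp only [TA, pref_length, List.getElem_map, List.getElem_range]
    rw [pref_getElem (pair p (const c)) h2]
    by_cases hi : i % 2 = 0
    · rw [if_pos hi, pref_getD p (show i / 2 < k by omega)]
      simp [pair, hi]
    · rw [if_neg hi]
      simp [pair, hi, const]

/-- left-extract: `pref x k ↦ pref (left x) ((k+1)/2)` -/
def TB (L : List ℕ) : List ℕ :=
  (List.range ((L.length + 1) / 2)).map (fun i => L.getD (2 * i) 0)

lemma TB_primrec : Primrec TB := by
  apply primrec_map_range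
  · exact Primrec₂.comp Primrec.nat_div
      (Primrec₂.comp Primrec.nat_add Primrec.list_length (Primrec.const 1)) (Primrec.const 2)
  · exact primrec_getD_comp (Primrec₂.comp Primrec.nat_mul (Primrec.const 2) Primrec.snd)

lemma TB_pref (x : Baire) (k : ℕ) : TB (pref x k) = pref (left x) ((k + 1) / 2) := by
  apply List.ext_getElem
  · simp [TB, pref_length, pref]
  · intro i h1 h2
    have hik : i < (k + 1) / 2 := by simpa [TB, pref_length] using h1
    simp only [TB, pref_length, List.getElem_map, List.getElem_range]
    rw [pref_getElem (left x) h2, pref_getD x (show 2 * i < k by omega)]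
    rfl

/-- `pref P k ↦ pref (pair (pair (left P) (const n)) (right P)) k` -/
def TC (n : ℕ) (L : List ℕ) : List ℕ :=
  (List.range L.length).map
    (fun i => if i % 4 = 0 then L.getD (i / 2) 0 else if i % 2 = 1 then L.getD i 0 else n)

lemma TC_primrec (n : ℕ) : Primrec (TC n) := by
  apply primrec_map_range Primrec.list_length
  apply Primrec.ite
  · exact PrimrecRel.comp Primrec.eq
      (Primrec₂.comp Primrec.nat_mod Primrec.snd (Primrec.const 4)) (Primrec.const 0)
  · exact primrec_getD_comp (Primrec₂.comp Primrec.nat_div Primrec.snd (Primrec.const 2))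
  · apply Primrec.ite
    · exact PrimrecRel.comp Primrec.eq
        (Primrec₂.comp Primrec.nat_mod Primrec.snd (Primrec.const 2)) (Primrec.const 1)
    · exact primrec_getD_comp Primrec.snd
    · exact Primrec.const n

lemma TC_pref (n : ℕ) (P : Baire) (k : ℕ) :
    TC n (pref P k) = pref (pair (pair (left P) (const n)) (right P)) k := by
  apply List.ext_getElem
  · simp [TC, pref_length, pref]
  · intro i h1 h2
    have hik : i < k := by simpa [TC, pref_length] using h1
    simp only [TC, pref_length, List.getElem_map, List.getElem_range]
    rw [pref_getElem _ h2]
    obtain ⟨a, b, hb, rfl⟩ : ∃ a b, b < 4 ∧ i = 4 * a + b :=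
      ⟨i / 4, i % 4, Nat.mod_lt _ (by norm_num), by omega⟩
    interval_cases b
    · have h4 : (4 * a + 0) % 4 = 0 := by omega
      rw [if_pos h4, pref_getD P (show (4 * a + 0) / 2 < k by omega)]
      simp only [pair, left]
      have e1 : (4 * a + 0) % 2 = 0 := by omega
      have e2 : (4 * a + 0) / 2 % 2 = 0 := by omega
      rw [if_pos e1, if_pos e2]
      congr 1; omega
    · have h4 : (4 * a + 1) % 4 ≠ 0 := by omega
      have h2' : (4 * a + 1) % 2 = 1 := by omega
      rw [if_neg h4, if_pos h2', pref_getD P hik]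
      simp only [pair, right]
      rw [if_neg (by omega : ¬ (4 * a + 1) % 2 = 0)]
      congr 1; omega
    · have h4 : (4 * a + 2) % 4 ≠ 0 := by omega
      have h2' : (4 * a + 2) % 2 ≠ 1 := by omega
      rw [if_neg h4, if_neg h2']
      simp only [pair, const]
      rw [if_pos (by omega : (4 * a + 2) % 2 = 0),
        if_neg (by omega : ¬ (4 * a + 2) / 2 % 2 = 0)]
    · have h4 : (4 * a + 3) % 4 ≠ 0 := by omega
      have h2' : (4 * a + 3) % 2 = 1 := by omega
      rw [if_neg h4, if_pos h2', pref_getD P hik]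
      simp only [pair, right]
      rw [if_neg (by omega : ¬ (4 * a + 3) % 2 = 0)]
      congr 1; omega

lemma transferA (e c : ℕ) :
    ∃ e', ∀ p r, FEval e (pair p (const c)) r → FEval e' p r := by
  obtain ⟨e', he'⟩ := transfer e (TA c) (TA_primrec c) id Primrec.id
    (fun p => pair p (const c)) id monotone_id (fun j => ⟨j, rfl⟩)
    (fun p k => TA_pref c p k)
  exact ⟨e', fun p r hr => he' p r hr⟩

lemma transferB (e : ℕ) :
    ∃ e', ∀ p r, FEval e (left p) r → FEval e' p r := by
  obtain ⟨e', he'⟩ := transfer e TB TB_primrec id Primrec.id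
    left (fun k => (k + 1) / 2)
    (fun a b hab => Nat.div_le_div_right (by omega)) (fun j => ⟨2 * j, by show (2 * j + 1) / 2 = j; omega⟩)
    (fun p k => TB_pref p k)
  exact ⟨e', fun p r hr => he' p r hr⟩

lemma transferC (e n : ℕ) :
    ∃ e', ∀ P r, FEval e (pair (pair (left P) (const n)) (right P)) r →
      FEval e' P (fun j => r (j + 1)) := by
  obtain ⟨e', he'⟩ := transfer e (TC n) (TC_primrec n) (fun j => j + 1)
    (Primrec₂.comp Primrec.nat_add Primrec.id (Primrec.const 1))
    (fun P => pair (pair (left P) (const n)) (right P)) id monotone_id (fun j => ⟨j, rfl⟩)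
    (fun P k => TC_pref n P k)
  exact ⟨e', fun P r hr => he' P r hr⟩

end Transforms
section Psi
open Nat.Partrec (Code)
open Nat.Partrec.Code

lemma psi_code (m : ℕ) :
    ∃ e, ∀ P : Baire, FEval e P (cons 1 (const (if P 2 = m then 1 else 0))) := by
  classical
  set val : ℕ → ℕ := fun x =>
    if x.unpair.2 = 0 then 1
    else if (Denumerable.ofNat (List ℕ) x.unpair.1).getD 2 0 = m then 1 else 0 with hval_def
  set c : ℕ → Bool := fun x =>
    decide (3 ≤ (Denumerable.ofNat (List ℕ) x.unpair.1).length) with hc_def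
  set g : ℕ →. ℕ := fun x => bif c x then Part.some (val x) else Part.none with hg_def
  have hval : Computable val := by
    apply Primrec.to_comp
    apply Primrec.ite
    · exact PrimrecRel.comp Primrec.eq (Primrec.snd.comp Primrec.unpair) (Primrec.const 0)
    · exact Primrec.const 1
    · apply Primrec.ite
      · exact PrimrecRel.comp Primrec.eq
          ((Primrec.list_getD 0).comp
            ((Primrec.ofNat (List ℕ)).comp (Primrec.fst.comp Primrec.unpair))
            (Primrec.const 2))
          (Primrec.const m)
      · exact Primrec.const 1
      · exact Primrec.const 0
  have hc : Computable c := by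
    apply Primrec.to_comp
    exact (PrimrecRel.comp Primrec.nat_le (Primrec.const 3)
      (Primrec.list_length.comp
        ((Primrec.ofNat (List ℕ)).comp (Primrec.fst.comp Primrec.unpair)))).decide
  have hg : Partrec g := Partrec.cond hc hval.partrec Partrec.none
  obtain ⟨cg, hcg⟩ := Nat.Partrec.Code.exists_code.1 (Partrec.nat_iff.mp hg)
  refine ⟨Encodable.encode cg, ?_⟩
  intro P
  have hq : ∀ k j, query (Encodable.encode cg) P k j = g (Nat.pair (Encodable.encode (pref P k)) j) := by
    intro k j
    simp [query, Denumerable.ofNat_encode, hcg]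
  intro j
  refine ⟨3, ?_, ?_⟩
  · rw [hq]
    have hcx : c (Nat.pair (Encodable.encode (pref P 3)) j) = true := by
      simp [hc_def, Nat.unpair_pair, Denumerable.ofNat_encode, pref_length]
    rw [hg_def]
    simp only [hcx, Bool.cond_true]
    congr 1
    simp only [hval_def, Nat.unpair_pair, Denumerable.ofNat_encode]
    rcases j with _ | j'
    · simp [cons]
    · rw [if_neg (by omega : ¬ (j' + 1 = 0)), pref_getD P (by omega : (2:ℕ) < 3)]
      simp [cons, const]
  · intro k' hk' hdom
    rw [hq] at hdom
    have hcx : c (Nat.pair (Encodable.encode (pref P k')) j) = false := by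
      simp [hc_def, Nat.unpair_pair, Denumerable.ofNat_encode, pref_length]
      omega
    rw [hg_def] at hdom
    simp only [hcx, Bool.cond_false] at hdom
    exact Part.not_none_dom hdom

end Psi
section Structural

lemma const_inj {n n' : ℕ} (h : const n = const n') : n = n' := congrFun h 0

lemma chi_dom_const (D : Set ℕ) (n : ℕ) : const n ∈ dom (chi D) := by
  classical
  by_cases hn : n ∈ D
  · exact ⟨const 1, n, rfl, Or.inl ⟨hn, rfl⟩⟩
  · exact ⟨const 0, n, rfl, Or.inr ⟨hn, rfl⟩⟩

lemma chi_dom_elim {D : Set ℕ} {x : Baire} (h : x ∈ dom (chi D)) : ∃ n, x = const n := by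
  obtain ⟨y, n, hx, -⟩ := h
  exact ⟨n, hx⟩

lemma mem_dom_meet {f g : Problem} {x : Baire} :
    x ∈ dom (meet f g) ↔ left x ∈ dom f ∧ right x ∈ dom g := by
  constructor
  · rintro ⟨y, h1, h2, -⟩
    exact ⟨h1, h2⟩
  · rintro ⟨⟨z, hz⟩, hg⟩
    exact ⟨cons 0 z, ⟨z, hz⟩, hg, Or.inl ⟨z, hz, rfl⟩⟩

/-- Membership of a `cons 1` in the meet via the chi branch. -/
lemma chi_branch_bit {D : Set ℕ} {n : ℕ} {z : Baire} (hz : z ∈ chi D (const n)) :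
    (n ∈ D ∧ z = const 1) ∨ (n ∉ D ∧ z = const 0) := by
  obtain ⟨n', hn', hor⟩ := hz
  obtain rfl := const_inj hn'
  exact hor

end Structural
section Core

variable {f h : Problem}

/-- The body of `WLE (meet f (chi D)) h` for fixed codes. -/
def Red (f h : Problem) (D : Set ℕ) (eΦ eΨ : ℕ) : Prop :=
  ∀ p ∈ dom (meet f (chi D)), ∃ p', FEval eΦ p p' ∧ p' ∈ dom h ∧
    ∀ q ∈ h p', ∃ r, FEval eΨ (pair p q) r ∧ r ∈ meet f (chi D) p

lemma cons1_bit {D : Set ℕ} {n : ℕ} {z : Baire} (hz : z ∈ chi D (const n)) :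
    n ∈ D ↔ (cons 1 z) 1 = 1 := by
  rcases chi_branch_bit hz with ⟨hn, rfl⟩ | ⟨hn, rfl⟩
  · exact iff_of_true hn rfl
  · exact iff_of_false hn (by simp [cons, const])

lemma meet_input_dom {D : Set ℕ} {x : Baire} (hx : x ∈ dom f) (n : ℕ) :
    pair x (const n) ∈ dom (meet f (chi D)) :=
  mem_dom_meet.2 ⟨by rw [left_pair]; exact hx, by rw [right_pair]; exact chi_dom_const D n⟩

lemma bit_witness (hfh : ¬ WLE f h) {D : Set ℕ} {eΦ eΨ : ℕ} (hR : Red f h D eΦ eΨ) (n : ℕ) :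
    ∃ x p' q r, x ∈ dom f ∧ FEval eΦ (pair x (const n)) p' ∧ q ∈ h p' ∧
      FEval eΨ (pair (pair x (const n)) q) r ∧ r 0 = 1 ∧ (n ∈ D ↔ r 1 = 1) := by
  by_contra hno
  have good : ∀ x ∈ dom f, ∀ p' q r, FEval eΦ (pair x (const n)) p' → q ∈ h p' →
      FEval eΨ (pair (pair x (const n)) q) r → ∃ z, z ∈ f x ∧ r = cons 0 z := by
    intro x hx p' q r h1 h2 h3
    obtain ⟨p1, hp1, hp1h, hback⟩ := hR _ (meet_input_dom hx n)
    obtain rfl := FEval_unique hp1 h1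
    obtain ⟨r1, hr1, hr1mem⟩ := hback q h2
    obtain rfl := FEval_unique hr1 h3
    obtain ⟨-, -, hcase⟩ := hr1mem
    rcases hcase with ⟨z, hz, rfl⟩ | ⟨z, hz, rfl⟩
    · rw [left_pair] at hz
      exact ⟨z, hz, rfl⟩
    · exfalso
      apply hno
      rw [right_pair] at hz
      exact ⟨x, p1, q, cons 1 z, hx, h1, h2, h3, rfl, cons1_bit hz⟩
  obtain ⟨e1, he1⟩ := transferA eΦ n
  obtain ⟨e2, he2⟩ := transferC eΨ n
  apply hfh
  refine ⟨e1, e2, ?_⟩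
  intro x hx
  obtain ⟨p', hp', hp'h, hback⟩ := hR _ (meet_input_dom (D := D) hx n)
  refine ⟨p', he1 x p' hp', hp'h, ?_⟩
  intro q hq
  obtain ⟨r, hrF, hrmem⟩ := hback q hq
  obtain ⟨z, hz, rfl⟩ := good x hx p' q r hp' hq hrF
  have h2' := he2 (pair x q) (cons 0 z) (by rw [left_pair, right_pair]; exact hrF)
  have hzz : (fun j => (cons 0 z) (j + 1)) = z := funext fun j => rfl
  rw [hzz] at h2'
  exact ⟨z, h2', hz⟩

lemma unique_D (hfh : ¬ WLE f h) {D D' : Set ℕ} {eΦ eΨ : ℕ}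
    (hR : Red f h D eΦ eΨ) (hR' : Red f h D' eΦ eΨ) : D = D' := by
  ext n
  obtain ⟨x, p', q, r, hx, h1, h2, h3, hr0, hbit⟩ := bit_witness hfh hR n
  obtain ⟨p1, hp1, -, hback⟩ := hR' _ (meet_input_dom (D := D') hx n)
  obtain rfl := FEval_unique hp1 h1
  obtain ⟨r1, hr1, hr1mem⟩ := hback q h2
  obtain rfl := FEval_unique hr1 h3
  obtain ⟨-, -, hcase⟩ := hr1mem
  rcases hcase with ⟨z, hz, rfl⟩ | ⟨z, hz, rfl⟩
  · exact absurd hr0 (by simp [cons])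
  · rw [right_pair] at hz
    exact hbit.trans (cons1_bit hz).symm

end Core
section Assembly

variable {f h : Problem}

lemma med_of_red {D : Set ℕ} {eΦ eΨ : ℕ} (hR : Red f h D eΦ eΨ) :
    MedLE (dom h) (dom f) := by
  obtain ⟨e', he'⟩ := transferA eΦ 0
  refine ⟨e', fun q hq => ?_⟩
  obtain ⟨p', hp', hp'h, -⟩ := hR _ (meet_input_dom (D := D) hq 0)
  exact ⟨p', he' q p' hp', hp'h⟩

lemma singleton_mem (hMed : MedLE (dom h) (dom f)) (m : ℕ) :
    WLE (meet f (chi {m})) h := by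
  classical
  obtain ⟨eM, heM⟩ := hMed
  obtain ⟨e1, he1⟩ := transferB eM
  obtain ⟨e2, he2⟩ := psi_code m
  refine ⟨e1, e2, ?_⟩
  intro p hp
  obtain ⟨hl, hr⟩ := mem_dom_meet.1 hp
  obtain ⟨p1, hp1, hp1h⟩ := heM (left p) hl
  refine ⟨p1, he1 p p1 hp1, hp1h, ?_⟩
  intro q hq
  obtain ⟨n, hn⟩ := chi_dom_elim hr
  have hp2 : (pair p q) 2 = n := by
    have h0 : right p 0 = n := congrFun hn 0
    have h1 : (pair p q) 2 = p 1 := by norm_num [pair]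
    rw [h1, ← h0]; rfl
  refine ⟨cons 1 (const (if (pair p q) 2 = m then 1 else 0)), he2 (pair p q), hl, hr,
    Or.inr ⟨const (if (pair p q) 2 = m then 1 else 0), ?_, rfl⟩⟩
  rw [hn, hp2]
  refine ⟨n, rfl, ?_⟩
  by_cases hnm : n = m
  · exact Or.inl ⟨by simp [hnm], by rw [if_pos hnm]⟩
  · exact Or.inr ⟨by simp [hnm], by rw [if_neg hnm]⟩

end Assembly
/-- If `f ≰_W h`, the set of `D ⊆ ℕ` with `f ⊓ χ_D ≤_W h` is countably infinite when
`dom h ≤_M dom f`, and empty when `dom h ≰_M dom f`. -/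
theorem chi_meet_cardinality (f h : Problem) (hfh : ¬ WLE f h) :
    (MedLE (dom h) (dom f) →
      {D : Set ℕ | WLE (meet f (chi D)) h}.Countable ∧
        {D : Set ℕ | WLE (meet f (chi D)) h}.Infinite) ∧
    (¬ MedLE (dom h) (dom f) → {D : Set ℕ | WLE (meet f (chi D)) h} = ∅) := by
  classical
  constructor
  · intro hMed
    constructor
    · rw [Set.countable_iff_exists_injOn]
      have hex : ∀ D : Set ℕ, WLE (meet f (chi D)) h →
          ∃ k : ℕ, Red f h D k.unpair.1 k.unpair.2 := by
        rintro D ⟨e1, e2, hR⟩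
        exact ⟨Nat.pair e1 e2, by rw [Nat.unpair_pair]; exact hR⟩
      refine ⟨fun D => if hD : WLE (meet f (chi D)) h then (hex D hD).choose else 0, ?_⟩
      intro D hD D' hD' hEq
      simp only [Set.mem_setOf_eq] at hD hD'
      simp only [dif_pos hD, dif_pos hD'] at hEq
      have s1 := (hex D hD).choose_spec
      have s2 := (hex D' hD').choose_spec
      rw [hEq] at s1
      exact unique_D hfh s1 s2
    · apply Set.infinite_of_injective_forall_mem (f := fun m : ℕ => ({m} : Set ℕ))
      · intro a b hab
        exact Set.singleton_eq_singleton_iff.1 hab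
      · intro m
        exact singleton_mem hMed m
  · intro hnMed
    ext D
    simp only [Set.mem_setOf_eq, Set.mem_empty_iff_false, iff_false]
    intro hD
    obtain ⟨eΦ, eΨ, hR⟩ := hD
    exact hnMed (med_of_red hR)

end WeihrauchPaper
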